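/- arXiv:2505.14486 — 2 statements merged into one kernel-verified Lean document; each statement's English description precedes it below -/
import Mathlib

section
/- Let k > 0 and ν_max ≥ 0 be real numbers, and let e be a real number with |e| < k. If ½·log(k²/(k² − e²)) ≤ ν_max, then |e| ≤ k·√(1 − exp(−2·ν_max)); moreover k·√(1 − exp(−2·ν_max)) < k, so the constraint |e| < k is never violated. -/
/-- From a bound `½·log(k²/(k²-e²)) ≤ ν_max` on the barrier Lyapunov term one obtains the
explicit error bound `|e| ≤ k·√(1 - exp (-2 ν_max))`, and this bound is strictly below `k`. -/
theorem barrier_error_bound (k νmax e : ℝ) (hk : 0 < k) (hν : 0 ≤ νmax) (he : |e| < k)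
    (h : (1 / 2) * Real.log (k ^ 2 / (k ^ 2 - e ^ 2)) ≤ νmax) :
    |e| ≤ k * Real.sqrt (1 - Real.exp (-2 * νmax)) ∧
      k * Real.sqrt (1 - Real.exp (-2 * νmax)) < k := by
  have he2 : e ^ 2 < k ^ 2 := by
    have := abs_nonneg e
    nlinarith [sq_abs e]
  have hden : 0 < k ^ 2 - e ^ 2 := by linarith
  have hratio : k ^ 2 / (k ^ 2 - e ^ 2) ≤ Real.exp (2 * νmax) := by
    have hpos : 0 < k ^ 2 / (k ^ 2 - e ^ 2) := div_pos (by positivity) hden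
    have hlog : Real.log (k ^ 2 / (k ^ 2 - e ^ 2)) ≤ 2 * νmax := by linarith
    calc k ^ 2 / (k ^ 2 - e ^ 2) = Real.exp (Real.log (k ^ 2 / (k ^ 2 - e ^ 2))) :=
          (Real.exp_log hpos).symm
      _ ≤ Real.exp (2 * νmax) := Real.exp_le_exp.mpr hlog
  have hexp : 0 < Real.exp (2 * νmax) := Real.exp_pos _
  have key : e ^ 2 ≤ k ^ 2 * (1 - Real.exp (-2 * νmax)) := by
    have h1 : k ^ 2 ≤ Real.exp (2 * νmax) * (k ^ 2 - e ^ 2) := by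
      have := (div_le_iff₀ hden).mp hratio
      linarith
    have h2 : Real.exp (-2 * νmax) * Real.exp (2 * νmax) = 1 := by
      rw [← Real.exp_add]; ring_nf; exact Real.exp_zero
    nlinarith [Real.exp_pos (-2 * νmax)]
  have hnn : (0:ℝ) ≤ 1 - Real.exp (-2 * νmax) := by
    nlinarith [Real.exp_pos (-2 * νmax), sq_nonneg e]
  constructor
  · have : |e| = Real.sqrt (e ^ 2) := (Real.sqrt_sq_eq_abs e).symm
    rw [this]
    calc Real.sqrt (e ^ 2) ≤ Real.sqrt (k ^ 2 * (1 - Real.exp (-2 * νmax))) :=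
          Real.sqrt_le_sqrt key
      _ = k * Real.sqrt (1 - Real.exp (-2 * νmax)) := by
          rw [Real.sqrt_mul (by positivity), Real.sqrt_sq hk.le]
  · have h4 : Real.sqrt (1 - Real.exp (-2 * νmax)) < 1 := by
      have hlt : 1 - Real.exp (-2 * νmax) < 1 := by linarith [Real.exp_pos (-2 * νmax)]
      calc Real.sqrt (1 - Real.exp (-2 * νmax)) < Real.sqrt 1 :=
            Real.sqrt_lt_sqrt hnn hlt
        _ = 1 := Real.sqrt_one
    nlinarith
end

section
/- Let k > 0 and C be real numbers, let z : [0,∞) → ℝ be continuous with z(0) ∈ (−k, k), and let V : (−k, k) → ℝ be a function such that V(x) → ∞ as x → k⁻ and V(x) → ∞ as x → (−k)⁺. Assume that for every t ≥ 0, if z(s) ∈ (−k, k) for all s ∈ [0, t], then V(z(t)) ≤ C. Then z(t) ∈ (−k, k) for all t ≥ 0. -/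
open Filter Set

/-- Barrier-Lyapunov confinement (Lemma 3 of the paper): if `z` is continuous on `[0,∞)`
with `z 0 ∈ (-k, k)`, `V` blows up at `±k`, and `V (z t) ≤ C` whenever the trajectory has
stayed in `(-k, k)` up to time `t`, then `z t ∈ (-k, k)` for all `t ≥ 0`. -/
theorem barrier_confinement (k C : ℝ) (hk : 0 < k) (z : ℝ → ℝ)
    (hz : ContinuousOn z (Set.Ici 0)) (hz0 : z 0 ∈ Set.Ioo (-k) k)
    (V : ℝ → ℝ)
    (hVk : Tendsto V (nhdsWithin k (Set.Iio k)) atTop)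
    (hVmk : Tendsto V (nhdsWithin (-k) (Set.Ioi (-k))) atTop)
    (hbound : ∀ t, 0 ≤ t → (∀ s ∈ Set.Icc 0 t, z s ∈ Set.Ioo (-k) k) → V (z t) ≤ C) :
    ∀ t, 0 ≤ t → z t ∈ Set.Ioo (-k) k := by
  by_contra hcon
  push_neg at hcon
  obtain ⟨t₀, ht₀, hzt₀⟩ := hcon
  set S : Set ℝ := Set.Ici 0 ∩ z ⁻¹' (Set.Ioo (-k) k)ᶜ with hS
  have hSne : S.Nonempty := ⟨t₀, ht₀, hzt₀⟩
  have hSbdd : BddBelow S := ⟨0, fun x hx => hx.1⟩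
  have hSclosed : IsClosed S :=
    hz.preimage_isClosed_of_isClosed isClosed_Ici (isOpen_Ioo.isClosed_compl)
  set T := sInf S with hT
  have hTS : T ∈ S := hSclosed.csInf_mem hSne hSbdd
  have hT0 : 0 ≤ T := hTS.1
  have hTpos : 0 < T := by
    rcases hT0.lt_or_eq with h | h
    · exact h
    · exact absurd hz0 (by rw [← h] at hTS; exact hTS.2)
  -- every s in [0, T) stays inside
  have hmin : ∀ s, 0 ≤ s → s < T → z s ∈ Set.Ioo (-k) k := by
    intro s hs hsT
    by_contra hns
    exact absurd (csInf_le hSbdd ⟨hs, hns⟩) (not_le.mpr hsT)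
  -- the left filter at T
  have hIoo : Set.Ioo (0:ℝ) T ⊆ Set.Ici 0 := fun x hx => le_of_lt hx.1
  set l : Filter ℝ := nhdsWithin T (Set.Ioo 0 T) with hl
  haveI : l.NeBot := by
    rw [hl, nhdsWithin_Ioo_eq_nhdsLT hTpos]
    exact nhdsLT_neBot T
  have hzt : Tendsto z l (nhds (z T)) :=
    (hz T hTS.1).mono hIoo
  have hin : ∀ᶠ s in l, z s ∈ Set.Ioo (-k) k := by
    filter_upwards [self_mem_nhdsWithin] with s hs
    exact hmin s (le_of_lt hs.1) hs.2
  have hzTle : z T ≤ k := le_of_tendsto hzt (hin.mono fun s hs => le_of_lt hs.2)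
  have hzTge : -k ≤ z T := ge_of_tendsto hzt (hin.mono fun s hs => le_of_lt hs.1)
  -- V ∘ z ≤ C along l
  have hVC : ∀ᶠ s in l, V (z s) ≤ C := by
    filter_upwards [self_mem_nhdsWithin] with s hs
    refine hbound s (le_of_lt hs.1) fun u hu => hmin u hu.1 (lt_of_le_of_lt hu.2 hs.2)
  -- z T ∉ Ioo, so z T = k or z T = -k
  have hzTnot : z T ∉ Set.Ioo (-k) k := hTS.2
  have htop : Tendsto (fun s => V (z s)) l atTop := by
    rcases ((Set.mem_Ioo).not.mp hzTnot) with h'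
    have : z T = -k ∨ z T = k := by
      rcases lt_or_ge (-k) (z T) with h1 | h1
      · right
        rcases lt_or_ge (z T) k with h2 | h2
        · exact absurd ⟨h1, h2⟩ hzTnot
        · exact le_antisymm hzTle h2
      · left; exact le_antisymm h1 hzTge
    rcases this with h | h
    · have : Tendsto z l (nhdsWithin (-k) (Set.Ioi (-k))) := by
        rw [tendsto_nhdsWithin_iff]
        exact ⟨h ▸ hzt, hin.mono fun s hs => hs.1⟩
      exact hVmk.comp this
    · have : Tendsto z l (nhdsWithin k (Set.Iio k)) := by
        rw [tendsto_nhdsWithin_iff]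
        exact ⟨h ▸ hzt, hin.mono fun s hs => hs.2⟩
      exact hVk.comp this
  have := (htop.eventually_gt_atTop C).and hVC
  rcases this.exists with ⟨s, h1, h2⟩
  exact absurd h2 (not_le.mpr h1)
end
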